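/- Let (ω¹,ω²,ω³) be a 1-adapted coframing of a bi-contact structure on a 3-manifold M, and let a₁, a₂ ∈ C²(M) be functions with ω_a = a₁ω¹ + a₂ω². Then ω_a ∧ dω_a = (𝒫_C(a) + a₂ a₁,₃ − a₁ a₂,₃) Ω, where aᵢ,₃ denotes the coframe derivative of aᵢ in the direction of the vector field e₃ dual to ω³. Consequently ω_a parameterizes a contact circle or contact hyperbola (with variable coefficients) precisely when a₁ a₂,₃ − a₂ a₁,₃ = 0; moreover, if ω³ locally defines a foliation, then the ratio a₁/a₂ is a first integral of e₃, i.e. is constant along integral curves of e₃. -/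

import Mathlib

/-!
An abstract framework for the (truncated) exterior algebra of differential forms
on a smooth manifold whose underlying point set is `M`.  Smooth functions are
modeled by elements of `M → ℝ`; the modules `Ω1`, `Ω2`, `Ω3` model the spaces of
smooth differential 1-, 2- and 3-forms, `d0, d1, d2` model the exterior
derivative and `w11, w12` the wedge products, subject to the usual identities
(Leibniz rules, `d ∘ d = 0`, graded (anti)commutativity, associativity).
-/
structure FormCtx (M : Type*) where
  Ω1 : Type*
  Ω2 : Type*
  Ω3 : Type*
  [acg1 : AddCommGroup Ω1]
  [acg2 : AddCommGroup Ω2]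
  [acg3 : AddCommGroup Ω3]
  [mod1 : Module (M → ℝ) Ω1]
  [mod2 : Module (M → ℝ) Ω2]
  [mod3 : Module (M → ℝ) Ω3]
  d0 : (M → ℝ) → Ω1
  d1 : Ω1 → Ω2
  d2 : Ω2 → Ω3
  w11 : Ω1 → Ω1 → Ω2
  w12 : Ω1 → Ω2 → Ω3
  d0_add : ∀ f g, d0 (f + g) = d0 f + d0 g
  d0_mul : ∀ f g, d0 (f * g) = f • d0 g + g • d0 f
  d1_add : ∀ a b, d1 (a + b) = d1 a + d1 b
  d1_smul : ∀ (f : M → ℝ) a, d1 (f • a) = f • d1 a + w11 (d0 f) a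
  d2_add : ∀ a b, d2 (a + b) = d2 a + d2 b
  d2_smul : ∀ (f : M → ℝ) a, d2 (f • a) = f • d2 a + w12 (d0 f) a
  dd0 : ∀ f, d1 (d0 f) = 0
  dd1 : ∀ a, d2 (d1 a) = 0
  w11_add_left : ∀ a b c, w11 (a + b) c = w11 a c + w11 b c
  w11_smul_left : ∀ (f : M → ℝ) a b, w11 (f • a) b = f • w11 a b
  w11_anticomm : ∀ a b, w11 a b = - w11 b a
  w12_add_left : ∀ a b c, w12 (a + b) c = w12 a c + w12 b c
  w12_add_right : ∀ a b c, w12 a (b + c) = w12 a b + w12 a c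
  w12_smul_left : ∀ (f : M → ℝ) a b, w12 (f • a) b = f • w12 a b
  w12_smul_right : ∀ (f : M → ℝ) a b, w12 a (f • b) = f • w12 a b
  w12_w11 : ∀ a b c, w12 a (w11 b c) = w12 c (w11 a b)
  d_w11 : ∀ a b, d2 (w11 a b) = w12 b (d1 a) - w12 a (d1 b)

attribute [instance] FormCtx.acg1 FormCtx.acg2 FormCtx.acg3
attribute [instance] FormCtx.mod1 FormCtx.mod2 FormCtx.mod3

namespace FormCtx

variable {M : Type*} (F : FormCtx M)

/-- A 3-form is a *volume form* iff it is an `(M → ℝ)`-basis of the module of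
3-forms; on a 3-manifold this says exactly that it is nowhere vanishing. -/
def IsVolume (τ : F.Ω3) : Prop := ∀ σ : F.Ω3, ∃! f : M → ℝ, σ = f • τ

/-- A 1-form `ω` is a contact form iff `ω ∧ dω` is a volume form. -/
def IsContact (ω : F.Ω1) : Prop := F.IsVolume (F.w12 ω (F.d1 ω))

/-- A 2-form on a 3-manifold is nowhere vanishing iff some 1-form wedges
with it to a volume form. -/
def Nvz2 (φ : F.Ω2) : Prop := ∃ α : F.Ω1, F.IsVolume (F.w12 α φ)

/-- `(ω1, ω2)` is a bi-contact structure: both are contact forms and their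
contact plane fields are everywhere distinct (`ω1 ∧ ω2` nowhere zero). -/
def IsBiContact (ω1 ω2 : F.Ω1) : Prop :=
  F.IsContact ω1 ∧ F.IsContact ω2 ∧ F.Nvz2 (F.w11 ω1 ω2)

/-- The 3-form `ω1 ∧ ω2 ∧ ω3`. -/
def vol (ω1 ω2 ω3 : F.Ω1) : F.Ω3 := F.w12 ω1 (F.w11 ω2 ω3)

/-- `(ω1, ω2, ω3)` is a 1-adapted coframing with sign `ε`:
`ω¹ ∧ dω¹ = −ε ω² ∧ dω² = ω¹ ∧ ω² ∧ ω³`, the latter being a volume form. -/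
def IsAdapted (ε : ℝ) (ω1 ω2 ω3 : F.Ω1) : Prop :=
  (ε = 1 ∨ ε = -1) ∧ F.IsVolume (F.vol ω1 ω2 ω3) ∧
    F.w12 ω1 (F.d1 ω1) = F.vol ω1 ω2 ω3 ∧
    F.w12 ω2 (F.d1 ω2) = (fun _ : M => -ε) • F.vol ω1 ω2 ω3

/-- The pencil `ω_a = a₁ ω¹ + a₂ ω²` with constant coefficients. -/
def pencil (ω1 ω2 : F.Ω1) (a1 a2 : ℝ) : F.Ω1 :=
  (fun _ : M => a1) • ω1 + (fun _ : M => a2) • ω2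

end FormCtx

/-- Pullback data for a smooth map `Φ : M → N`: the pullback operation on
differential forms, compatible with the module structures, the exterior
derivatives and the wedge products (pullback of functions is `f ∘ Φ`). -/
structure FormPullback {M N : Type*} (F : FormCtx M) (G : FormCtx N) (Φ : M → N) where
  p1 : G.Ω1 → F.Ω1
  p2 : G.Ω2 → F.Ω2
  p3 : G.Ω3 → F.Ω3
  p1_add : ∀ a b, p1 (a + b) = p1 a + p1 b
  p2_add : ∀ a b, p2 (a + b) = p2 a + p2 b
  p3_add : ∀ a b, p3 (a + b) = p3 a + p3 b
  p1_smul : ∀ (f : N → ℝ) a, p1 (f • a) = (f ∘ Φ) • p1 a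
  p2_smul : ∀ (f : N → ℝ) a, p2 (f • a) = (f ∘ Φ) • p2 a
  p3_smul : ∀ (f : N → ℝ) a, p3 (f • a) = (f ∘ Φ) • p3 a
  p_d0 : ∀ f : N → ℝ, F.d0 (f ∘ Φ) = p1 (G.d0 f)
  p_d1 : ∀ a, F.d1 (p1 a) = p2 (G.d1 a)
  p_d2 : ∀ a, F.d2 (p2 a) = p3 (G.d2 a)
  p_w11 : ∀ a b, p2 (G.w11 a b) = F.w11 (p1 a) (p1 b)
  p_w12 : ∀ a b, p3 (G.w12 a b) = F.w12 (p1 a) (p2 b)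

/-- The quadratic form `𝒫_C(a) = a₁² − ε a₂² + 2C a₁ a₂`. -/
def Pc (ε c a1 a2 : ℝ) : ℝ := a1 ^ 2 - ε * a2 ^ 2 + 2 * c * a1 * a2

/-!
STATEMENT 3.  For a 1-adapted bi-contact coframing `(ω1, ω2, ω3)` with
invariant `C` and functions `a1, a2 ∈ C²(M)`, with `ω_a = a₁ω¹ + a₂ω²`:
`ω_a ∧ dω_a = (𝒫_C(a) + a₂ a₁,₃ − a₁ a₂,₃) Ω` (coframe derivatives
`daᵢ = aᵢ,₁ω¹ + aᵢ,₂ω² + aᵢ,₃ω³`).  Consequently `ω_a` parameterizes a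
contact circle/hyperbola with variable coefficients precisely when
`a₁ a₂,₃ − a₂ a₁,₃ = 0`, and if `ω³` defines a foliation then the ratio
`a₁/a₂` is a first integral of the dual vector field `e₃`
(its `ω³`-coframe derivative vanishes).
-/
namespace FormCtx

variable {M : Type*} (F : FormCtx M)

lemma w12_zero_right (a : F.Ω1) : F.w12 a 0 = 0 := by
  have h := F.w12_add_right a 0 0
  rw [add_zero] at h
  exact left_eq_add.mp h

lemma w12_neg_right (a : F.Ω1) (b : F.Ω2) : F.w12 a (-b) = -(F.w12 a b) := by
  have h := F.w12_add_right a b (-b)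
  rw [add_neg_cancel, F.w12_zero_right] at h
  exact eq_neg_of_add_eq_zero_right h.symm

lemma half_two : ((1/2 : M → ℝ) * 2) = 1 := by
  funext p
  norm_num

lemma w11_self (a : F.Ω1) : F.w11 a a = 0 := by
  have h := F.w11_anticomm a a
  have h2 : F.w11 a a + F.w11 a a = 0 := by
    nth_rewrite 2 [h]; exact add_neg_cancel _
  calc F.w11 a a = ((1/2 : M → ℝ) * 2) • F.w11 a a := by rw [half_two, one_smul]
    _ = (1/2 : M → ℝ) • ((2 : M → ℝ) • F.w11 a a) := by rw [mul_smul]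
    _ = (1/2 : M → ℝ) • (F.w11 a a + F.w11 a a) := by rw [two_smul]
    _ = 0 := by rw [h2, smul_zero]

lemma w12_w11_self (a b : F.Ω1) : F.w12 a (F.w11 a b) = 0 := by
  rw [F.w12_w11, F.w11_self, F.w12_zero_right]

lemma coeff3_eq (ω1 ω2 ω3 : F.Ω1) (hvol : F.IsVolume (F.vol ω1 ω2 ω3))
    (f1 f2 f3 g1 g2 g3 : M → ℝ)
    (h : f1 • ω1 + f2 • ω2 + f3 • ω3 = g1 • ω1 + g2 • ω2 + g3 • ω3) :
    f3 = g3 := by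
  have e1 : F.w12 ω1 (F.w11 ω1 ω2) = 0 := F.w12_w11_self ω1 ω2
  have e2 : F.w12 ω2 (F.w11 ω1 ω2) = 0 := by
    rw [F.w12_w11]; exact F.w12_w11_self ω2 ω1
  have e3 : F.w12 ω3 (F.w11 ω1 ω2) = F.vol ω1 ω2 ω3 := (F.w12_w11 ω1 ω2 ω3).symm
  have key : ∀ u1 u2 u3 : M → ℝ,
      F.w12 (u1 • ω1 + u2 • ω2 + u3 • ω3) (F.w11 ω1 ω2) = u3 • F.vol ω1 ω2 ω3 := by
    intro u1 u2 u3
    simp only [F.w12_add_left, F.w12_smul_left, e1, e2, e3, smul_zero, add_zero, zero_add]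
  have hf := key f1 f2 f3
  have hg := key g1 g2 g3
  rw [h, hg] at hf
  obtain ⟨u, _, huniq⟩ := hvol (f3 • F.vol ω1 ω2 ω3)
  have h1 : f3 = u := huniq f3 rfl
  have h2 : g3 = u := huniq g3 hf.symm
  rw [h1, h2]

end FormCtx

theorem variable_coefficient_pencil
    {M : Type*} (F : FormCtx M) (ε : ℝ) (ω1 ω2 ω3 : F.Ω1)
    (hbc : F.IsBiContact ω1 ω2) (had : F.IsAdapted ε ω1 ω2 ω3)
    (C : M → ℝ)
    (hC : F.w12 ω1 (F.d1 ω2) + F.w12 ω2 (F.d1 ω1) = (2 * C) • F.vol ω1 ω2 ω3)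
    (a1 a2 a11 a12 a13 a21 a22 a23 : M → ℝ)
    (hda1 : F.d0 a1 = a11 • ω1 + a12 • ω2 + a13 • ω3)
    (hda2 : F.d0 a2 = a21 • ω1 + a22 • ω2 + a23 • ω3) :
    (F.w12 (a1 • ω1 + a2 • ω2) (F.d1 (a1 • ω1 + a2 • ω2)) =
        (fun p => Pc ε (C p) (a1 p) (a2 p) + a2 p * a13 p - a1 p * a23 p) •
          F.vol ω1 ω2 ω3) ∧
    (a1 * a23 - a2 * a13 = 0 →
      F.w12 (a1 • ω1 + a2 • ω2) (F.d1 (a1 • ω1 + a2 • ω2)) =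
        (fun p => Pc ε (C p) (a1 p) (a2 p)) • F.vol ω1 ω2 ω3) ∧
    (F.w12 ω3 (F.d1 ω3) = 0 → a1 * a23 - a2 * a13 = 0 →
      ∀ h h1 h2 h3 : M → ℝ, (∀ p, a2 p ≠ 0) → h * a2 = a1 →
        F.d0 h = h1 • ω1 + h2 • ω2 + h3 • ω3 → h3 = 0) := by
  obtain ⟨hsign, hvol, h11, h22⟩ := had
  set Ω := F.vol ω1 ω2 ω3 with hΩ
  -- triple product identities
  have T31 : F.w12 ω3 (F.w11 ω1 ω2) = Ω := (F.w12_w11 ω1 ω2 ω3).symm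
  have T23 : F.w12 ω2 (F.w11 ω3 ω1) = Ω := F.w12_w11 ω2 ω3 ω1
  have e1 : F.w12 ω1 (F.w11 ω2 ω1) = 0 := by
    rw [F.w12_w11]; exact F.w12_w11_self ω1 ω2
  have e2 : F.w12 ω1 (F.w11 ω3 ω1) = 0 := by
    rw [F.w12_w11]; exact F.w12_w11_self ω1 ω3
  have e3 : F.w12 ω1 (F.w11 ω3 ω2) = -Ω := by
    rw [F.w11_anticomm, F.w12_neg_right]
    exact congrArg Neg.neg rfl
  have e4 : F.w12 ω2 (F.w11 ω2 ω1) = 0 := F.w12_w11_self ω2 ω1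
  have e6 : F.w12 ω2 (F.w11 ω1 ω2) = 0 := by
    rw [F.w12_w11]; exact F.w12_w11_self ω2 ω1
  have e7 : F.w12 ω2 (F.w11 ω3 ω2) = 0 := by
    rw [F.w12_w11]; exact F.w12_w11_self ω2 ω3
  have e8 : F.w12 ω1 (F.w11 ω1 ω2) = 0 := F.w12_w11_self ω1 ω2
  -- the main formula
  have hd : F.d1 (a1 • ω1 + a2 • ω2) =
      a1 • F.d1 ω1 + a2 • F.d1 ω2 + F.w11 (F.d0 a1) ω1 + F.w11 (F.d0 a2) ω2 := by
    rw [F.d1_add, F.d1_smul, F.d1_smul]; abel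
  have hX : F.w12 ω1 (F.d1 ω2) = (2 * C) • Ω - F.w12 ω2 (F.d1 ω1) := by
    rw [← hC]; abel
  have hPc : (fun p => Pc ε (C p) (a1 p) (a2 p) + a2 p * a13 p - a1 p * a23 p)
      = a1 * a1 + (fun _ : M => -ε) * (a2 * a2) + 2 * C * a1 * a2
          + a2 * a13 - a1 * a23 := by
    funext p
    simp [Pc]
    ring
  have main : F.w12 (a1 • ω1 + a2 • ω2) (F.d1 (a1 • ω1 + a2 • ω2)) =
      (fun p => Pc ε (C p) (a1 p) (a2 p) + a2 p * a13 p - a1 p * a23 p) • Ω := by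
    rw [hd, hda1, hda2, hPc]
    simp only [F.w12_add_left, F.w12_add_right, F.w12_smul_left, F.w12_smul_right,
      F.w11_add_left, F.w11_smul_left, F.w11_self, F.w12_zero_right,
      e1, e2, e3, e4, e6, e7, e8, T23, smul_zero, add_zero, zero_add,
      h11, h22, hX]
    module
  have not23 : a1 * a23 - a2 * a13 = 0 →
      F.w12 (a1 • ω1 + a2 • ω2) (F.d1 (a1 • ω1 + a2 • ω2)) =
        (fun p => Pc ε (C p) (a1 p) (a2 p)) • Ω := by
    intro h0
    rw [main]
    congr 1
    funext p
    have h0p := congrFun h0 p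
    simp only [Pi.sub_apply, Pi.mul_apply, Pi.zero_apply] at h0p
    linarith
  refine ⟨main, not23, ?_⟩
  intro _ h0 h h1 h2 h3 ha2 hha hd0h
  have hcomb : (h * a21 + a2 * h1) • ω1 + (h * a22 + a2 * h2) • ω2
      + (h * a23 + a2 * h3) • ω3 = a11 • ω1 + a12 • ω2 + a13 • ω3 := by
    calc (h * a21 + a2 * h1) • ω1 + (h * a22 + a2 * h2) • ω2
          + (h * a23 + a2 * h3) • ω3
        = h • F.d0 a2 + a2 • F.d0 h := by rw [hda2, hd0h]; module
      _ = F.d0 (h * a2) := (F.d0_mul h a2).symm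
      _ = F.d0 a1 := by rw [hha]
      _ = a11 • ω1 + a12 • ω2 + a13 • ω3 := hda1
  have hc : h * a23 + a2 * h3 = a13 :=
    F.coeff3_eq ω1 ω2 ω3 hvol _ _ _ _ _ _ hcomb
  funext p
  have h0p := congrFun h0 p
  have hcp := congrFun hc p
  have hap := congrFun hha p
  simp only [Pi.sub_apply, Pi.mul_apply, Pi.add_apply, Pi.zero_apply] at h0p hcp hap
  have key : a2 p * a2 p * h3 p = 0 := by
    linear_combination -h0p + a2 p * hcp - a23 p * hap
  have hne : a2 p * a2 p ≠ 0 := mul_ne_zero (ha2 p) (ha2 p)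
  have := mul_eq_zero.mp key
  rcases this with hbad | hgood
  · exact absurd hbad hne
  · exact hgood
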